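/- arXiv:0901.1652 — 2 statements merged into one kernel-verified Lean document; each statement's English description precedes it below -/
import Mathlib

section
/- Let V be a finite-dimensional real inner product space with inner product [·;·], let M : V → V be a symmetric positive-definite operator, and let v₁, …, vₙ ∈ V. Then the operator M − Σ_{i=1}^n v_i [v_i; ·] is positive semidefinite if and only if the symmetric n×n real matrix K with entries K_{ij} = [v_i; M^{-1} v_j] satisfies 0 ≤ K ≤ Id (i.e. both K and Id − K are positive semidefinite). -/
open scoped RealInnerProductSpace
open Matrix

/-!
Write `A x = ∑ i, x i • v i`, so that `∑ i, ⟪v i, w⟫ ^ 2 = ‖Aᵀ w‖²` and `K = Aᵀ M⁻¹ A`; the two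
conditions say `A Aᵀ ≤ M` and `Aᵀ M⁻¹ A ≤ 1`. Both implications come from completing a square.
If `A Aᵀ ≤ M`, put `y = K x = Aᵀ (M⁻¹ A x)`: the hypothesis at `M⁻¹ A x` gives `‖y‖² ≤ ⟪x, y⟫`, and
`0 ≤ ‖x - y‖²` then yields `⟪x, K x⟫ ≤ ‖x‖²`. Conversely, if `K ≤ 1`, put `x = Aᵀ w`:
`0 ≤ ⟪w - M⁻¹ A x, M (w - M⁻¹ A x)⟫ = ⟪w, M w⟫ - 2 ‖x‖² + ⟪x, K x⟫` yields `‖x‖² ≤ ⟪w, M w⟫`.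
-/

namespace LinearMap

variable {V : Type*} [NormedAddCommGroup V] [InnerProductSpace ℝ V]

theorem IsPositive.of_comp_eq_id {M N : V →ₗ[ℝ] V} (hM : M.IsPositive) (hMN : M ∘ₗ N = id) :
    N.IsPositive := by
  have hMN' : ∀ w, M (N w) = w := LinearMap.congr_fun hMN
  refine (isPositive_iff N).2 ⟨fun a b => ?_, fun w => ?_⟩
  · calc ⟪N a, b⟫ = ⟪N a, M (N b)⟫ := by rw [hMN']
      _ = ⟪M (N a), N b⟫ := (hM.isSymmetric _ _).symm
      _ = ⟪a, N b⟫ := by rw [hMN']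
  · simpa only [hMN'] using hM.inner_nonneg_right (N w)

end LinearMap

namespace Matrix

variable {ι : Type*} {V : Type*} [NormedAddCommGroup V] [InnerProductSpace ℝ V]

def gramWith (T : V →ₗ[ℝ] V) (v : ι → V) : Matrix ι ι ℝ := of fun i j => ⟪v i, T (v j)⟫

theorem isHermitian_gramWith {T : V →ₗ[ℝ] V} (v : ι → V) (hT : T.IsSymmetric) :
    (gramWith T v).IsHermitian := by
  ext i j
  simp only [gramWith, conjTranspose_apply, of_apply, star_trivial]
  rw [← hT, real_inner_comm]

variable [Fintype ι]

theorem posSemidef_one_sub_iff [DecidableEq ι] {K : Matrix ι ι ℝ} (hK : K.IsHermitian) :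
    (1 - K).PosSemidef ↔ ∀ x, x ⬝ᵥ K *ᵥ x ≤ x ⬝ᵥ x := by
  simp only [posSemidef_iff_dotProduct_mulVec, isHermitian_one.sub hK, true_and, star_trivial,
    sub_mulVec, one_mulVec, dotProduct_sub, sub_nonneg]

theorem inner_sum_smul_left (v : ι → V) (x : ι → ℝ) (w : V) :
    ⟪∑ i, x i • v i, w⟫ = x ⬝ᵥ fun i => ⟪v i, w⟫ := by
  simp only [sum_inner, real_inner_smul_left, dotProduct]

theorem gramWith_mulVec (T : V →ₗ[ℝ] V) (v : ι → V) (x : ι → ℝ) :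
    gramWith T v *ᵥ x = fun i => ⟪v i, T (∑ j, x j • v j)⟫ := by
  ext i
  simp only [gramWith, mulVec, dotProduct, of_apply, map_sum, map_smul, inner_sum,
    real_inner_smul_right, mul_comm]

theorem dotProduct_gramWith_mulVec (T : V →ₗ[ℝ] V) (v : ι → V) (x : ι → ℝ) :
    x ⬝ᵥ gramWith T v *ᵥ x = ⟪∑ i, x i • v i, T (∑ i, x i • v i)⟫ := by
  rw [gramWith_mulVec, inner_sum_smul_left]

theorem posSemidef_gramWith {T : V →ₗ[ℝ] V} (v : ι → V) (hT : T.IsPositive) :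
    (gramWith T v).PosSemidef := by
  refine posSemidef_iff_dotProduct_mulVec.2 ⟨isHermitian_gramWith v hT.isSymmetric, fun x => ?_⟩
  rw [star_trivial, dotProduct_gramWith_mulVec]
  exact hT.inner_nonneg_right _

end Matrix

section LoewnerCriterion

variable {V : Type*} [NormedAddCommGroup V] [InnerProductSpace ℝ V] {ι : Type*} [Fintype ι]
  {M N : V →ₗ[ℝ] V} {v : ι → V}

theorem dotProduct_gramWith_mulVec_le_of_sum_inner_sq_le (hMN : M ∘ₗ N = LinearMap.id)
    (h : ∀ w, ∑ i, ⟪v i, w⟫ ^ 2 ≤ ⟪w, M w⟫) (x : ι → ℝ) :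
    x ⬝ᵥ gramWith N v *ᵥ x ≤ x ⬝ᵥ x := by
  set u := ∑ i, x i • v i
  set y := gramWith N v *ᵥ x
  have hMNu : M (N u) = u := LinearMap.congr_fun hMN u
  have hy : y = fun i => ⟪v i, N u⟫ := gramWith_mulVec N v x
  have hyy : y ⬝ᵥ y ≤ x ⬝ᵥ y := by
    calc y ⬝ᵥ y = ∑ i, ⟪v i, N u⟫ ^ 2 := by simp only [hy, dotProduct, sq]
      _ ≤ ⟪N u, M (N u)⟫ := h (N u)
      _ = x ⬝ᵥ y := by rw [hMNu, real_inner_comm, hy, inner_sum_smul_left]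
  have hsq : 0 ≤ (x - y) ⬝ᵥ (x - y) := dotProduct_self_star_nonneg (x - y)
  simp only [sub_dotProduct, dotProduct_sub, dotProduct_comm y x] at hsq
  linarith

theorem sum_inner_sq_le_of_dotProduct_gramWith_mulVec_le (hM : M.IsPositive)
    (hMN : M ∘ₗ N = LinearMap.id) (h : ∀ x : ι → ℝ, x ⬝ᵥ gramWith N v *ᵥ x ≤ x ⬝ᵥ x) (w : V) :
    ∑ i, ⟪v i, w⟫ ^ 2 ≤ ⟪w, M w⟫ := by
  set x : ι → ℝ := fun i => ⟪v i, w⟫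
  set u := ∑ i, x i • v i
  have hMNu : M (N u) = u := LinearMap.congr_fun hMN u
  have hs : ∑ i, ⟪v i, w⟫ ^ 2 = ⟪u, w⟫ := by
    simp only [u, inner_sum_smul_left, dotProduct, x, sq]
  have ht : ⟪u, N u⟫ ≤ ⟪u, w⟫ := by
    rw [← dotProduct_gramWith_mulVec, inner_sum_smul_left]
    exact h x
  have hsq : 0 ≤ ⟪w - N u, M (w - N u)⟫ := hM.inner_nonneg_right _
  simp only [map_sub, hMNu, inner_sub_left, inner_sub_right, ← hM.isSymmetric (N u) w,
    real_inner_comm u] at hsq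
  linarith

end LoewnerCriterion

theorem loewner_criterion_general
    {V : Type*} [NormedAddCommGroup V] [InnerProductSpace ℝ V]
    (M N : V →ₗ[ℝ] V)
    (hMsym : ∀ u w : V, ⟪M u, w⟫ = ⟪u, M w⟫)
    (hMpd : ∀ u : V, u ≠ 0 → 0 < ⟪u, M u⟫)
    (hMN : M ∘ₗ N = LinearMap.id)
    {n : ℕ} (v : Fin n → V) :
    (∀ w : V, 0 ≤ ⟪w, M w⟫ - ∑ i : Fin n, ⟪v i, w⟫ ^ 2) ↔
      ((Matrix.of fun i j : Fin n => ⟪v i, N (v j)⟫).PosSemidef ∧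
        ((1 : Matrix (Fin n) (Fin n) ℝ) -
            Matrix.of fun i j : Fin n => ⟪v i, N (v j)⟫).PosSemidef) := by
  have hM : M.IsPositive := (M.isPositive_iff).2 ⟨hMsym, fun u => by
    rcases eq_or_ne u 0 with rfl | hu
    · simp
    · exact real_inner_comm u (M u) ▸ (hMpd u hu).le⟩
  have hN : N.IsPositive := hM.of_comp_eq_id hMN
  have hK := posSemidef_one_sub_iff (isHermitian_gramWith v hN.isSymmetric)
  simp_rw [sub_nonneg]
  exact ⟨fun h => ⟨posSemidef_gramWith v hN,
      hK.2 (dotProduct_gramWith_mulVec_le_of_sum_inner_sq_le hMN h)⟩,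
    fun h => sum_inner_sq_le_of_dotProduct_gramWith_mulVec_le hM hMN (hK.1 h.2)⟩

/-- **Lemma (Loewner criterion).** Let `V` be a finite-dimensional real inner product
space, `M : V → V` symmetric positive definite with inverse `N`, and `v₁, …, vₙ ∈ V`.
Then `M - ∑ᵢ vᵢ [vᵢ; ·]` is positive semidefinite iff the `n×n` matrix
`K_{ij} = [vᵢ; M⁻¹ vⱼ]` satisfies `0 ≤ K ≤ Id` in the Loewner order. -/
theorem loewner_criterion
    {V : Type*} [NormedAddCommGroup V] [InnerProductSpace ℝ V] [FiniteDimensional ℝ V]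
    (M N : V →ₗ[ℝ] V)
    (hMsym : ∀ u w : V, ⟪M u, w⟫ = ⟪u, M w⟫)
    (hMpd : ∀ u : V, u ≠ 0 → 0 < ⟪u, M u⟫)
    (hMN : M ∘ₗ N = LinearMap.id) (hNM : N ∘ₗ M = LinearMap.id)
    {n : ℕ} (v : Fin n → V) :
    (∀ w : V, 0 ≤ ⟪w, M w⟫ - ∑ i : Fin n, ⟪v i, w⟫ ^ 2) ↔
      ((Matrix.of fun i j : Fin n => ⟪v i, N (v j)⟫).PosSemidef ∧
        ((1 : Matrix (Fin n) (Fin n) ℝ) -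
            Matrix.of fun i j : Fin n => ⟪v i, N (v j)⟫).PosSemidef) :=
  loewner_criterion_general M N hMsym hMpd hMN v
end

section
/- The logarithm of the determinant of the generator of the random walk in random environment is a convex function of the environment: for every β > 0, ε > 0 and L ≥ 2, the map t ↦ log det D_{β,ε}(t) is convex on ℝ^Λ. -/
/-!
Write `D_{β,ε}(t) = B W(t) Bᵀ`, where the columns of `B` are the oriented nearest-neighbour
differences `δ_i - δ_j` and the unit vectors `δ_k`, and `W(t)` is diagonal with entries
`(β/2) e^{t_i+t_j}` and `ε e^{t_k}`. By Cauchy–Binet, `det D_{β,ε}(t)` is a sum over column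
selections `S` of `(det B_S)² ∏_{c ∈ S} W(t)_c`, i.e. a nonnegative combination of exponentials of
linear forms in `t`; the selection of all site columns contributes `ε^|Λ| e^{∑ t_k} > 0`.
The logarithm of such a sum is convex by Hölder's inequality.
-/

open scoped BigOperators Classical
open MeasureTheory

noncomputable section

/-- The 3-dimensional discrete torus of side `L`. -/
abbrev Torus (L : ℕ) := Fin 3 → ZMod L

/-- The unit vector in direction `i`. -/
def unitVec (L : ℕ) (i : Fin 3) : Torus L := fun j => if j = i then 1 else 0

/-- Nearest-neighbor relation on the torus. -/
def NN {L : ℕ} (x y : Torus L) : Prop :=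
  x ≠ y ∧ ∃ i : Fin 3, y = x + unitVec L i ∨ y = x - unitVec L i

/-- Periodic (Euclidean) distance on the torus. -/
def torusDist {L : ℕ} (x y : Torus L) : ℝ :=
  Real.sqrt (∑ i : Fin 3, (min ((x i - y i).val) (L - (x i - y i).val) : ℝ) ^ 2)

variable {L : ℕ}

/-- Sum of a (symmetric) function over unordered nearest-neighbor pairs. -/
def nnSum [NeZero L] (f : Torus L → Torus L → ℝ) : ℝ :=
  (1 / 2) * ∑ x : Torus L, ∑ y : Torus L, if NN x y then f x y else 0

/-- The matrix of the operator `D_{β,ε}(t)`, the symmetric operator on `ℝ^Λ` with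
quadratic form `β ∑_{NN (ij)} e^{t_i+t_j}(v_i-v_j)² + ε ∑_k e^{t_k} v_k²`. -/
def Dmat [NeZero L] (β ε : ℝ) (t : Torus L → ℝ) : Matrix (Torus L) (Torus L) ℝ :=
  Matrix.of fun j k =>
    if j = k then
      β * (∑ i : Torus L, if NN i j then Real.exp (t i + t j) else 0) + ε * Real.exp (t j)
    else if NN j k then -(β * Real.exp (t j + t k)) else 0

/-- The free energy (effective action) `F_{β,ε}(t)`. -/
def freeEnergy [NeZero L] (β ε : ℝ) (t : Torus L → ℝ) : ℝ :=
  β * nnSum (fun i j => Real.cosh (t i - t j) - 1)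
    - (1 / 2) * Real.log (Dmat β ε t).det
    + ∑ k : Torus L, (t k - ε + ε * Real.cosh (t k))

/-- The expectation `⟨f⟩ = ∫ f(t) e^{-F_{β,ε}(t)} ∏ dt_k/√(2π)`. -/
def expect [NeZero L] (β ε : ℝ) (f : (Torus L → ℝ) → ℝ) : ℝ :=
  ∫ t : Torus L → ℝ,
    f t * Real.exp (-(freeEnergy β ε t)) *
      ((Real.sqrt (2 * Real.pi))⁻¹) ^ (Fintype.card (Torus L))

open Real Finset Matrix

theorem Real.sum_rpow_mul_rpow_le {κ : Type*} (s : Finset κ) {u v : κ → ℝ}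
    (hu : ∀ p ∈ s, 0 ≤ u p) (hv : ∀ p ∈ s, 0 ≤ v p) {a b : ℝ} (ha : 0 < a) (hb : 0 < b)
    (hab : a + b = 1) :
    ∑ p ∈ s, u p ^ a * v p ^ b ≤ (∑ p ∈ s, u p) ^ a * (∑ p ∈ s, v p) ^ b := by
  have hpow {w : κ → ℝ} {c : ℝ} (hw : ∀ p ∈ s, 0 ≤ w p) (hc : 0 < c) :
      ∑ p ∈ s, (w p ^ c) ^ c⁻¹ = ∑ p ∈ s, w p :=
    sum_congr rfl fun p hp => rpow_rpow_inv (hw p hp) hc.ne'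
  simpa only [hpow hu ha, hpow hv hb, one_div, inv_inv] using
    inner_le_Lp_mul_Lq_of_nonneg s (HolderConjugate.inv_inv ha hb hab)
      (fun p hp => rpow_nonneg (hu p hp) a) (fun p hp => rpow_nonneg (hv p hp) b)

theorem convexOn_log_sum_mul_exp {E κ : Type*} [AddCommGroup E] [Module ℝ E] [Fintype κ]
    {s : Set E} {c : κ → ℝ} {g : κ → E → ℝ} (hc : ∀ p, 0 ≤ c p) (hc₀ : ∃ p, 0 < c p)
    (hg : ∀ p, ConvexOn ℝ s (g p)) :
    ConvexOn ℝ s fun x => log (∑ p, c p * exp (g p x)) := by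
  obtain ⟨p₀, hp₀⟩ := hc₀
  have hpos (x : E) : 0 < ∑ p, c p * exp (g p x) :=
    sum_pos' (fun p _ => by have := hc p; positivity) ⟨p₀, mem_univ _, by positivity⟩
  refine convexOn_iff_forall_pos.2 ⟨(hg p₀).1, fun x hx y hy a b ha hb hab => ?_⟩
  have hterm (p : κ) : c p * exp (g p (a • x + b • y))
      ≤ (c p * exp (g p x)) ^ a * (c p * exp (g p y)) ^ b := by
    calc c p * exp (g p (a • x + b • y))
        ≤ c p * exp (a * g p x + b * g p y) :=
          mul_le_mul_of_nonneg_left (exp_le_exp.2 ((hg p).2 hx hy ha.le hb.le hab)) (hc p)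
      _ = (c p ^ a * c p ^ b) * (exp (g p x * a) * exp (g p y * b)) := by
          rw [← rpow_add' (hc p) (by rw [hab]; exact one_ne_zero), hab, rpow_one, ← exp_add]
          ring_nf
      _ = _ := by
          rw [exp_mul, exp_mul, mul_rpow (hc p) (exp_pos _).le,
            mul_rpow (hc p) (exp_pos _).le]
          ring
  calc log (∑ p, c p * exp (g p (a • x + b • y)))
      ≤ log ((∑ p, c p * exp (g p x)) ^ a * (∑ p, c p * exp (g p y)) ^ b) := by
        refine log_le_log (hpos _) ((sum_le_sum fun p _ => hterm p).trans ?_)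
        exact sum_rpow_mul_rpow_le _ (fun p _ => by have := hc p; positivity)
          (fun p _ => by have := hc p; positivity) ha hb hab
    _ = a • log (∑ p, c p * exp (g p x)) + b • log (∑ p, c p * exp (g p y)) := by
        rw [log_mul (rpow_pos_of_pos (hpos x) a).ne' (rpow_pos_of_pos (hpos y) b).ne',
          log_rpow (hpos x), log_rpow (hpos y), smul_eq_mul, smul_eq_mul]

theorem Matrix.det_mul_eq_sum_prod_mul_det_submatrix {n ι R : Type*} [Fintype n] [DecidableEq n]
    [Fintype ι] [CommRing R] (M : Matrix n ι R) (N : Matrix ι n R) :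
    (M * N).det = ∑ p : n → ι, (∏ j, N (p j) j) * (M.submatrix id p).det := by
  simp only [det_apply', mul_apply, prod_univ_sum, mul_sum, Fintype.piFinset_univ]
  rw [sum_comm]
  refine sum_congr rfl fun p _ => sum_congr rfl fun σ _ => ?_
  simp only [submatrix_apply, id_eq, prod_mul_distrib]
  ring

theorem Matrix.factorial_mul_det_mul_diagonal_mul_transpose {n ι R : Type*} [Fintype n]
    [DecidableEq n] [Fintype ι] [DecidableEq ι] [CommRing R] (B : Matrix n ι R) (w : ι → R) :
    (Fintype.card n).factorial * (B * diagonal w * Bᵀ).det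
      = ∑ p : n → ι, (∏ k, w (p k)) * (B.submatrix id p).det ^ 2 := by
  set F : (n → ι) → R := fun p => (∏ j, w (p j) * B j (p j)) * (B.submatrix id p).det
  have hdet : (B * diagonal w * Bᵀ).det = ∑ p, F p := by
    simp [Matrix.mul_assoc, det_mul_eq_sum_prod_mul_det_submatrix, F, diagonal_mul]
  -- Averaging over the reorderings `p ∘ τ` of each column selection turns the factor
  -- `∏ j, B j (p j)` into a second copy of `det (B.submatrix id p)`.
  have hreindex (τ : Equiv.Perm n) : ∑ p, F (p ∘ τ) = ∑ p, F p :=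
    Equiv.sum_comp (Equiv.arrowCongr τ.symm (Equiv.refl ι)) F
  have hperm (p : n → ι) (τ : Equiv.Perm n) : F (p ∘ τ) = (∏ k, w (p k)) *
      (B.submatrix id p).det * (Equiv.Perm.sign τ * ∏ j, B j (p (τ j))) := by
    have : B.submatrix id (p ∘ τ) = (B.submatrix id p).submatrix id τ := rfl
    simp only [F, this, det_permute', prod_mul_distrib, Function.comp_apply,
      Equiv.prod_comp τ fun j => w (p j)]
    ring
  have hsign (p : n → ι) :
      ∑ τ : Equiv.Perm n, (Equiv.Perm.sign τ : R) * ∏ j, B j (p (τ j))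
        = (B.submatrix id p).det := by
    rw [← det_transpose, det_apply']
    rfl
  calc (Fintype.card n).factorial * (B * diagonal w * Bᵀ).det
      = ∑ τ : Equiv.Perm n, ∑ p, F (p ∘ τ) := by
        simp [hdet, hreindex, Fintype.card_perm]
    _ = _ := by
        rw [sum_comm]
        refine sum_congr rfl fun p _ => ?_
        simp only [hperm, ← mul_sum, hsign]
        ring

theorem Matrix.convexOn_log_det_mul_diagonal_exp_mul_transpose {n ι E : Type*} [Fintype n]
    [DecidableEq n] [Fintype ι] [DecidableEq ι] [AddCommGroup E] [Module ℝ E]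
    (B : Matrix n ι ℝ) {c : ι → ℝ} (ℓ : ι → E →ₗ[ℝ] ℝ) (hc : ∀ i, 0 ≤ c i)
    (hB : ∃ p : n → ι, (B.submatrix id p).det ≠ 0 ∧ ∀ k, 0 < c (p k)) :
    ConvexOn ℝ Set.univ fun x => log (B * diagonal (fun i => c i * exp (ℓ i x)) * Bᵀ).det := by
  have hN : (0 : ℝ) < (Fintype.card n).factorial := by positivity
  set c' : (n → ι) → ℝ :=
    fun p => (∏ k, c (p k)) * (B.submatrix id p).det ^ 2 / (Fintype.card n).factorial
  have hexpand (x : E) : (B * diagonal (fun i => c i * exp (ℓ i x)) * Bᵀ).det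
      = ∑ p : n → ι, c' p * exp ((∑ k, ℓ (p k)) x) := by
    rw [← mul_right_inj' hN.ne', factorial_mul_det_mul_diagonal_mul_transpose, mul_sum]
    refine sum_congr rfl fun p _ => ?_
    rw [prod_mul_distrib, ← exp_sum, LinearMap.sum_apply]
    simp only [c']
    field_simp
  simp_rw [hexpand]
  refine convexOn_log_sum_mul_exp
    (fun p => div_nonneg (mul_nonneg (prod_nonneg fun k _ => hc _) (sq_nonneg _)) hN.le) ?_
    fun p => (∑ k, ℓ (p k)).convexOn convex_univ
  obtain ⟨p, hdet, hcp⟩ := hB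
  exact ⟨p, div_pos (mul_pos (prod_pos fun k _ => hcp k) (by positivity)) hN⟩

theorem sum_sum_incidence_mul_incidence {α R : Type*} [Fintype α] [DecidableEq α] [CommRing R]
    (f : α → α → R) (hf : ∀ i i', f i i' = f i' i) (j k : α) :
    ∑ i, ∑ i', ((if j = i then 1 else 0) - (if j = i' then 1 else 0)) * f i i' *
        ((if k = i then 1 else 0) - (if k = i' then 1 else 0))
      = 2 * ((if j = k then ∑ i, f i j else 0) - f j k) := by
  rcases eq_or_ne j k with rfl | hjk
  · simp only [sub_mul, ite_mul, one_mul, zero_mul, mul_sub, mul_ite, mul_one, mul_zero,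
      sum_sub_distrib, sum_ite_irrel, sum_const_zero, sum_ite_eq, mem_univ, ↓reduceIte, hf j]
    ring
  · simp only [sub_mul, ite_mul, one_mul, zero_mul, mul_sub, mul_ite, mul_one, mul_zero,
      sum_sub_distrib, sum_ite_irrel, sum_const_zero, sum_ite_eq, mem_univ, ↓reduceIte, hjk,
      sub_zero, zero_sub, hf j, mul_neg]
    ring

theorem NN.symm {x y : Torus L} (h : NN x y) : NN y x := by
  obtain ⟨hne, i, h | h⟩ := h
  · exact ⟨hne.symm, i, Or.inr (by rw [h]; abel)⟩
  · exact ⟨hne.symm, i, Or.inl (by rw [h]; abel)⟩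

def incidence (L : ℕ) : Matrix (Torus L) ((Torus L × Torus L) ⊕ Torus L) ℝ :=
  Matrix.of fun x => Sum.elim
    (fun e => (if x = e.1 then 1 else 0) - (if x = e.2 then 1 else 0))
    (fun k => if x = k then 1 else 0)

-- Each nearest-neighbour pair is listed in both orientations, hence `β / 2`.
def edgeSiteCoeff (β ε : ℝ) : (Torus L × Torus L) ⊕ Torus L → ℝ :=
  Sum.elim (fun e => if NN e.1 e.2 then β / 2 else 0) (fun _ => ε)

def edgeSiteExponent : (Torus L × Torus L) ⊕ Torus L → (Torus L → ℝ) →ₗ[ℝ] ℝ :=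
  Sum.elim (fun e => LinearMap.proj (R := ℝ) (φ := fun _ => ℝ) e.1 + LinearMap.proj e.2)
    (LinearMap.proj (R := ℝ) (φ := fun _ => ℝ))

theorem Dmat_eq_incidence_mul_diagonal_mul_transpose [NeZero L] (β ε : ℝ) (t : Torus L → ℝ) :
    Dmat β ε t = incidence L *
      diagonal (fun c => edgeSiteCoeff β ε c * exp (edgeSiteExponent c t)) * (incidence L)ᵀ := by
  set f : Torus L → Torus L → ℝ := fun i i' => if NN i i' then β / 2 * exp (t i + t i') else 0
  have hf (i i' : Torus L) : f i i' = f i' i := by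
    by_cases h : NN i i'
    · simp only [f, h, h.symm, if_true, add_comm]
    · simp only [f, if_neg h, if_neg fun h' : NN i' i => h h'.symm]
  ext j k
  rw [mul_apply]
  simp only [mul_diagonal, transpose_apply, Fintype.sum_sum_type, Fintype.sum_prod_type]
  have hedge (x y : Torus L) : edgeSiteCoeff β ε (Sum.inl (x, y)) *
      exp (edgeSiteExponent (Sum.inl (x, y)) t) = f x y := by
    simp [edgeSiteCoeff, edgeSiteExponent, f]
  simp only [incidence, of_apply, Sum.elim_inl, Sum.elim_inr, hedge,
    sum_sum_incidence_mul_incidence f hf]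
  have hsite : ∑ m, (if j = m then 1 else 0) *
      (edgeSiteCoeff β ε (Sum.inr m) * exp (edgeSiteExponent (Sum.inr m) t)) *
      (if k = m then 1 else 0) = if j = k then ε * exp (t j) else 0 := by
    rcases eq_or_ne j k with rfl | hjk
    · simp [edgeSiteCoeff, edgeSiteExponent]
    · simp [edgeSiteCoeff, edgeSiteExponent, hjk]
  rw [hsite]
  rcases eq_or_ne j k with rfl | hjk
  · have hfjj : f j j = 0 := if_neg fun h => h.1 rfl
    simp only [Dmat, of_apply, if_true, hfjj, sub_zero, mul_sum, f]
    congr 1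
    exact sum_congr rfl fun i _ => by split_ifs <;> ring
  · simp only [Dmat, of_apply, if_neg hjk, f, add_zero]
    split_ifs <;> ring

theorem edgeSiteCoeff_nonneg {β ε : ℝ} (hβ : 0 ≤ β) (hε : 0 ≤ ε)
    (c : (Torus L × Torus L) ⊕ Torus L) : 0 ≤ edgeSiteCoeff β ε c := by
  rcases c with e | k
  · exact ite_nonneg (by linarith) le_rfl
  · exact hε

theorem incidence_submatrix_inr : (incidence L).submatrix id Sum.inr = 1 := by
  ext x y
  simp [incidence, one_apply]

/-- **Convexity of `log det D_{β,ε}`.** For every `β > 0`, `ε > 0` and torus side `L ≥ 2`,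
the map `t ↦ log det D_{β,ε}(t)` is convex on `ℝ^Λ`. -/
theorem logDet_convex (β ε : ℝ) (hβ : 0 < β) (hε : 0 < ε) (L : ℕ) :
    ConvexOn ℝ Set.univ (fun t : Torus (L + 2) → ℝ => Real.log (Dmat β ε t).det) := by
  simp_rw [Dmat_eq_incidence_mul_diagonal_mul_transpose]
  refine convexOn_log_det_mul_diagonal_exp_mul_transpose _ _ (edgeSiteCoeff_nonneg hβ.le hε.le)
    ⟨Sum.inr, by simp [incidence_submatrix_inr], fun _ => hε⟩

end
end
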